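/- Let (F, ⪯) be an ordered system on a finite set N and v a belief function on F. Define v*(f) = min { ⟨f,x⟩ : x ∈ ℝ^N₊, x(F) ≥ v(F) for all F ∈ F } for f ∈ ℝ^N₊. Then v* is nonnegative, positively homogeneous, superadditive on ℝ^N₊, and satisfies v*(1_F) ≥ v(F) for all F ∈ F; moreover, for every functional I: ℝ^N₊ → ℝ₊ with these four properties, v*(f) ≤ I(f) holds for all f ∈ ℝ^N₊. -/

import Mathlib

/-!
`v*(f)` is the value of the covering program `min ⟨f, x⟩` over `x ≥ 0` with `x(F) ≥ v(F)`. As a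
minimum of linear functionals with nonnegative minimisers it is itself an upper integral. For
minimality, LP duality gives, for every `t < v*(f)`, weights `q ≥ 0` with `∑ q_F 1_F ≤ f` and
`∑ q_F v(F) > t`; superadditivity, homogeneity and nonnegativity of an upper integral `I` then give
`I f ≥ I (∑ q_F 1_F) ≥ ∑ q_F v(F) > t`.

Duality comes from separating `b` from the closure of the cone `{A x - s | x, s ≥ 0}`. To avoid
proving that this cone is closed, the separation is applied only when `b` stays a fixed distance `δ`
away from it; for the covering program this holds because `x ↦ x + δ` turns `δ`-approximate
solutions into feasible ones.
-/

open Matrix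

section Duality

theorem Matrix.weak_duality {R κ ν : Type*} [Fintype κ] [Fintype ν] [Semiring R] [PartialOrder R]
    [IsOrderedRing R] {A : Matrix κ ν R} {b : κ → R} {c x : ν → R} {q : κ → R}
    (hq : 0 ≤ q) (hqA : q ᵥ* A ≤ c) (hx : 0 ≤ x) (hAx : b ≤ A *ᵥ x) : q ⬝ᵥ b ≤ c ⬝ᵥ x :=
  calc q ⬝ᵥ b ≤ q ⬝ᵥ (A *ᵥ x) := dotProduct_le_dotProduct_of_nonneg_left hAx hq
    _ = (q ᵥ* A) ⬝ᵥ x := dotProduct_mulVec q A x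
    _ ≤ c ⬝ᵥ x := dotProduct_le_dotProduct_of_nonneg_right hqA hx

variable {κ ν : Type*} [Fintype κ] [Fintype ν]

theorem Matrix.exists_farkas_certificate (A : Matrix κ ν ℝ) (b : κ → ℝ) {δ : ℝ} (hδ : 0 < δ)
    (h : ∀ x, 0 ≤ x → ∃ j, (A *ᵥ x) j ≤ b j - δ) :
    ∃ p, 0 ≤ p ∧ p ᵥ* A ≤ 0 ∧ 0 < p ⬝ᵥ b := by
  classical
  let G : (ν → ℝ) × (κ → ℝ) →L[ℝ] κ → ℝ :=
    LinearMap.toContinuousLinearMap (A.mulVecLin.coprod (-LinearMap.id))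
  have hG (x : ν → ℝ) (s : κ → ℝ) : G (x, s) = A *ᵥ x - s := by
    simp [G, sub_eq_add_neg]
  have hb : b ∉ (ProperCone.positive ℝ _).map G := by
    rw [ProperCone.mem_map, PointedCone.mem_closure, Metric.mem_closure_iff]
    intro hcl
    obtain ⟨_, ⟨⟨x, s⟩, hxs, rfl⟩, hdist⟩ := hcl δ hδ
    obtain ⟨hx, hs⟩ : 0 ≤ x ∧ 0 ≤ s := hxs
    obtain ⟨j, hj⟩ := h x hx
    have hclose := (dist_pi_lt_iff hδ).1 hdist j
    change dist (b j) (G (x, s) j) < δ at hclose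
    rw [hG, Real.dist_eq, abs_lt] at hclose
    have hsj : 0 ≤ s j := hs j
    simp only [Pi.sub_apply] at hclose
    linarith [hclose.2]
  obtain ⟨φ, hφG, hφb⟩ := ProperCone.hyperplane_separation_point _ hb
  set p : κ → ℝ := fun j => -φ (Pi.single j 1)
  have hφ (y : κ → ℝ) : φ y = -(p ⬝ᵥ y) := by
    have hsingle (j : κ) : Pi.single j (y j) = y j • Pi.single j (1 : ℝ) := by
      rw [← Pi.single_smul', smul_eq_mul, mul_one]
    conv_lhs => rw [← Finset.univ_sum_single y]
    simp [hsingle, p, dotProduct, mul_comm]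
  have hφG' (x : ν → ℝ) (s : κ → ℝ) (hx : 0 ≤ x) (hs : 0 ≤ s) : 0 ≤ φ (A *ᵥ x - s) := by
    rw [← hG]
    exact hφG _ (subset_closure ⟨(x, s), ⟨hx, hs⟩, rfl⟩)
  refine ⟨p, fun j => ?_, fun a => ?_, ?_⟩
  · simpa [p] using hφG' 0 (Pi.single j 1) le_rfl (Pi.single_nonneg.2 zero_le_one)
  · have := hφG' (Pi.single a 1) 0 (Pi.single_nonneg.2 zero_le_one) le_rfl
    rw [sub_zero, hφ, dotProduct_mulVec] at this
    simpa using this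
  · rw [hφ] at hφb
    linarith

theorem Matrix.exists_dual_feasible_gt (A : Matrix κ ν ℝ) (b : κ → ℝ) (c : ν → ℝ) (t : ℝ) {δ : ℝ}
    (hδ : 0 < δ) (hfeas : ∃ x₀, 0 ≤ x₀ ∧ b ≤ A *ᵥ x₀)
    (h : ∀ x, 0 ≤ x → (∀ i, b i - δ < (A *ᵥ x) i) → t + δ ≤ c ⬝ᵥ x) :
    ∃ q, 0 ≤ q ∧ q ᵥ* A ≤ c ∧ t < q ⬝ᵥ b := by
  obtain ⟨p, hp, hpA, hpb⟩ := (fromRows A (replicateRow Unit (-c))).exists_farkas_certificate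
    (Sum.elim b fun _ => -t) hδ fun x hx => by
      by_contra! hx'
      have hcost := hx' (.inr ())
      simp only [fromRows_mulVec, Sum.elim_inr, replicateRow_mulVec_eq_const, Function.const_apply,
        neg_dotProduct] at hcost
      linarith [h x hx fun i => by simpa using hx' (.inl i)]
  set q := p ∘ Sum.inl
  set μ := p (.inr ())
  have hqA : q ᵥ* A ≤ μ • c := fun a => by
    simpa [vecMul, dotProduct, replicateRow_apply, q, μ] using hpA a
  have hqb : μ * t < q ⬝ᵥ b := by
    simpa [dotProduct, q, μ] using hpb
  obtain ⟨x₀, hx₀, hAx₀⟩ := hfeas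
  have hμ : 0 < μ := by
    by_contra! hμ
    replace hμ : μ = 0 := le_antisymm hμ (hp _)
    rw [hμ, zero_smul] at hqA
    rw [hμ, zero_mul] at hqb
    have := weak_duality (q := q) (fun i => hp (.inl i)) hqA hx₀ hAx₀
    rw [zero_dotProduct] at this
    linarith
  refine ⟨μ⁻¹ • q, ?_, ?_, ?_⟩
  · exact smul_nonneg (inv_nonneg.2 hμ.le) fun i => hp _
  · rw [smul_vecMul, inv_smul_le_iff_of_pos hμ]
    exact hqA
  · rw [smul_dotProduct, smul_eq_mul, lt_inv_mul_iff₀ hμ]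
    exact hqb

end Duality

section UpperIntegral

variable {N ι : Type*} [DecidableEq N] (Fi : ι → Finset N) (v : ι → ℝ)

def incidence : Matrix ι N ℝ := Matrix.of fun i a => if a ∈ Fi i then 1 else 0

lemma incidence_nonneg (i : ι) : 0 ≤ incidence Fi i := fun a => by
  simp only [incidence, of_apply, Pi.zero_apply]
  positivity

lemma incidence_mulVec [Fintype N] (x : N → ℝ) (i : ι) :
    (incidence Fi *ᵥ x) i = ∑ a ∈ Fi i, x a := by
  simp [incidence, mulVec, dotProduct, ite_mul, Finset.sum_ite_mem]

def primalValues [Fintype N] (f : N → ℝ) : Set ℝ :=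
  {r | ∃ x : N → ℝ, (∀ a, 0 ≤ x a) ∧ (∀ i, v i ≤ ∑ a ∈ Fi i, x a) ∧ r = ∑ a, f a * x a}

structure IsUpperIntegral (I : (N → ℝ) → ℝ) : Prop where
  nonneg : ∀ f : N → ℝ, 0 ≤ f → 0 ≤ I f
  smul : ∀ f : N → ℝ, 0 ≤ f → ∀ c : ℝ, 0 ≤ c → I (c • f) = c * I f
  superadditive : ∀ f g : N → ℝ, 0 ≤ f → 0 ≤ g → I f + I g ≤ I (f + g)
  le_indicator : ∀ i, v i ≤ I (fun a => if a ∈ Fi i then 1 else 0)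

namespace IsUpperIntegral

variable {Fi v} {I : (N → ℝ) → ℝ} (hI : IsUpperIntegral Fi v I)
include hI

lemma mono {f g : N → ℝ} (hg : 0 ≤ g) (hgf : g ≤ f) : I g ≤ I f := by
  have := hI.superadditive g (f - g) hg (sub_nonneg.2 hgf)
  rw [add_sub_cancel] at this
  linarith [hI.nonneg _ (sub_nonneg.2 hgf)]

lemma sum_mul_le {q : ι → ℝ} (hq : 0 ≤ q) (s : Finset ι) :
    ∑ i ∈ s, q i * v i ≤ I (∑ i ∈ s, q i • incidence Fi i) := by
  classical
  induction s using Finset.induction_on with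
  | empty => simpa using hI.nonneg 0 le_rfl
  | insert i s hi ih =>
    have hrow := incidence_nonneg Fi i
    have hrest : 0 ≤ ∑ j ∈ s, q j • incidence Fi j :=
      Finset.sum_nonneg fun j _ => smul_nonneg (hq j) (incidence_nonneg Fi j)
    rw [Finset.sum_insert hi, Finset.sum_insert hi]
    calc q i * v i + ∑ j ∈ s, q j * v j
        ≤ q i * I (incidence Fi i) + I (∑ j ∈ s, q j • incidence Fi j) :=
          add_le_add (mul_le_mul_of_nonneg_left (hI.le_indicator i) (hq i)) ih
      _ = I (q i • incidence Fi i) + I (∑ j ∈ s, q j • incidence Fi j) := by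
          rw [hI.smul _ hrow _ (hq i)]
      _ ≤ _ := hI.superadditive _ _ (smul_nonneg (hq i) hrow) hrest

lemma dotProduct_le [Fintype ι] {q : ι → ℝ} {f : N → ℝ} (hq : 0 ≤ q)
    (hqf : q ᵥ* incidence Fi ≤ f) : q ⬝ᵥ v ≤ I f := by
  rw [vecMul_eq_sum] at hqf
  exact (hI.sum_mul_le hq Finset.univ).trans <| hI.mono
    (Finset.sum_nonneg fun i _ => smul_nonneg (hq i) (incidence_nonneg Fi i)) hqf

end IsUpperIntegral

end UpperIntegral

section LeastUpperIntegral

variable {N ι : Type*} [Fintype N] [DecidableEq N] {Fi : ι → Finset N} {v : ι → ℝ}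

lemma isUpperIntegral_of_isLeast {vstar : (N → ℝ) → ℝ}
    (hvstar : ∀ f : N → ℝ, 0 ≤ f → IsLeast (primalValues Fi v f) (vstar f)) :
    IsUpperIntegral Fi v vstar where
  nonneg f hf := by
    obtain ⟨x, hx, -, hr⟩ := (hvstar f hf).1
    exact hr ▸ Finset.sum_nonneg fun a _ => mul_nonneg (hf a) (hx a)
  smul f hf c hc := by
    have hcf : 0 ≤ c • f := smul_nonneg hc hf
    obtain ⟨x, hx, hxv, hr⟩ := (hvstar f hf).1
    obtain ⟨y, hy, hyv, hr'⟩ := (hvstar _ hcf).1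
    refine le_antisymm ((hvstar _ hcf).2 ⟨x, hx, hxv, ?_⟩) ?_
    · simp [hr, Finset.mul_sum, mul_assoc]
    · calc c * vstar f ≤ c * ∑ a, f a * y a :=
            mul_le_mul_of_nonneg_left ((hvstar f hf).2 ⟨y, hy, hyv, rfl⟩) hc
        _ = vstar (c • f) := by simp [hr', Finset.mul_sum, mul_assoc]
  superadditive f g hf hg := by
    obtain ⟨x, hx, hxv, hr⟩ := (hvstar _ (add_nonneg hf hg)).1
    have h1 := (hvstar f hf).2 ⟨x, hx, hxv, rfl⟩
    have h2 := (hvstar g hg).2 ⟨x, hx, hxv, rfl⟩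
    have : ∑ a, (f + g) a * x a = ∑ a, f a * x a + ∑ a, g a * x a := by
      simp [add_mul, Finset.sum_add_distrib]
    linarith
  le_indicator i := by
    obtain ⟨x, -, hxv, hr⟩ := (hvstar _ (incidence_nonneg Fi i)).1
    have : vstar (incidence Fi i) = ∑ a ∈ Fi i, x a := hr.trans (incidence_mulVec Fi x i)
    exact this ▸ hxv i

lemma exists_dual_feasible_gt_of_isLeast [Fintype ι] {f : N → ℝ} {r t : ℝ} (hf : 0 ≤ f)
    (hr : IsLeast (primalValues Fi v f) r) (ht : t < r) :
    ∃ q, 0 ≤ q ∧ q ᵥ* incidence Fi ≤ f ∧ t < q ⬝ᵥ v := by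
  obtain ⟨x₀, hx₀, hvx₀, -⟩ := hr.1
  set S := ∑ a, f a
  have hS : 0 ≤ S := Finset.sum_nonneg fun a _ => hf a
  set δ := (r - t) / (1 + S)
  have hδ : 0 < δ := div_pos (sub_pos.2 ht) (by linarith)
  have hrδ : r = t + δ + δ * S := by
    simp only [δ]; field_simp; ring
  refine (incidence Fi).exists_dual_feasible_gt v f t hδ
    ⟨x₀, hx₀, fun i => (incidence_mulVec Fi x₀ i).symm ▸ hvx₀ i⟩ fun x hx hxv => ?_
  simp only [incidence_mulVec] at hxv
  have hcover (i : ι) : v i ≤ ∑ a ∈ Fi i, (x a + δ) := by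
    obtain hempty | ⟨a, ha⟩ := (Fi i).eq_empty_or_nonempty
    · simpa [hempty] using hvx₀ i
    · have hcard : (1 : ℝ) ≤ (Fi i).card := by exact_mod_cast Finset.card_pos.2 ⟨a, ha⟩
      rw [Finset.sum_add_distrib, Finset.sum_const, nsmul_eq_mul]
      nlinarith [hxv i]
  have hle : r ≤ ∑ a, f a * (x a + δ) :=
    hr.2 ⟨fun a => x a + δ, fun a => add_nonneg (hx a) hδ.le, hcover, rfl⟩
  have hsum : ∑ a, f a * (x a + δ) = f ⬝ᵥ x + δ * S := by
    simp [mul_add, Finset.sum_add_distrib, ← Finset.sum_mul, dotProduct, mul_comm, S]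
  linarith

theorem IsUpperIntegral.le_of_isLeast [Fintype ι] {I : (N → ℝ) → ℝ} (hI : IsUpperIntegral Fi v I)
    {f : N → ℝ} (hf : 0 ≤ f) {r : ℝ} (hr : IsLeast (primalValues Fi v f) r) : r ≤ I f :=
  le_of_forall_lt fun _t ht =>
    let ⟨_q, hq, hqf, htq⟩ := exists_dual_feasible_gt_of_isLeast hf hr ht
    htq.trans_le (hI.dotProduct_le hq hqf)

end LeastUpperIntegral

theorem stmt_3 {N : Type*} [Fintype N] [DecidableEq N] (m : ℕ)
    (Fi : Fin m → Finset N)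
    (v : Fin m → ℝ)
    (vstar : (N → ℝ) → ℝ)
    (hvstar : ∀ f : N → ℝ, (∀ a, 0 ≤ f a) →
      IsLeast {r : ℝ | ∃ x : N → ℝ, (∀ a, 0 ≤ x a) ∧
        (∀ i, v i ≤ ∑ a ∈ Fi i, x a) ∧ r = ∑ a, f a * x a} (vstar f)) :
    (∀ f : N → ℝ, (∀ a, 0 ≤ f a) → 0 ≤ vstar f) ∧
    (∀ f : N → ℝ, (∀ a, 0 ≤ f a) → ∀ c : ℝ, 0 ≤ c →
        vstar (fun a => c * f a) = c * vstar f) ∧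
    (∀ f g : N → ℝ, (∀ a, 0 ≤ f a) → (∀ a, 0 ≤ g a) →
        vstar f + vstar g ≤ vstar (f + g)) ∧
    (∀ i, v i ≤ vstar (fun a => if a ∈ Fi i then 1 else 0)) ∧
    (∀ I : (N → ℝ) → ℝ,
        (∀ f : N → ℝ, (∀ a, 0 ≤ f a) → 0 ≤ I f) →
        (∀ f : N → ℝ, (∀ a, 0 ≤ f a) → ∀ c : ℝ, 0 ≤ c →
            I (fun a => c * f a) = c * I f) →
        (∀ f g : N → ℝ, (∀ a, 0 ≤ f a) → (∀ a, 0 ≤ g a) → I f + I g ≤ I (f + g)) →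
        (∀ i, v i ≤ I (fun a => if a ∈ Fi i then 1 else 0)) →
        ∀ f : N → ℝ, (∀ a, 0 ≤ f a) → vstar f ≤ I f) := by
  have hU : IsUpperIntegral Fi v vstar := isUpperIntegral_of_isLeast hvstar
  exact ⟨hU.nonneg, hU.smul, hU.superadditive, hU.le_indicator,
    fun I h₀ h₁ h₂ h₃ f hf => IsUpperIntegral.le_of_isLeast ⟨h₀, h₁, h₂, h₃⟩ hf (hvstar f hf)⟩
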